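/- arXiv:2403.11512 — 2 statements merged into one kernel-verified Lean document; each statement's English description precedes it below -/
import Mathlib

section
/- For every positive even integer p and every integer q with gcd(p,q) = 1 and p + 2q > 0, one has ∑_{k=1}^{(p+2q)/2} (−1)^{⌊(2k−1)q/(p+2q)⌋} = ∑_{k=1}^{p/2} (−1)^{⌊(2k−1)q/p⌋} + 1, where ⌊·⌋ denotes the floor of the indicated rational number. (This is the arithmetic content, via Tuler's formula, of Proposition 3.2(3): lk(R_{p/q}) = lk(R_{(p+2q)/q}) − 1, obtained by adding two horizontal twists to a rational tangle.) -/
/-!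
Write `S(X, q)` for `tulerSum X q`. For `q > 0` expand `(-1) ^ n = 1 - 2 * ∑_{1 ≤ m ≤ n} (-1) ^ (m - 1)`
and swap the sums: `S(X, q) = X/2 - 2 * ∑_{1 ≤ m < q} (-1) ^ (m - 1) * N_m(X)`, where `N_m(X)`
counts the `k ≤ X/2` with `m X ≤ (2k - 1) q`, i.e. `N_m(X) = X/2 - ⌊(m X + q - 1) / 2q⌋`.
Replacing `X` by `X + 2q` raises `N_m` by `q - m` whatever `X` is, so
`S(X + 2q, q) - S(X, q) = S(2q, q) = ∑_{k ≤ q} (-1) ^ (k - 1)`, which is `1` for odd `q`.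
Coprimality with the even `p` makes `q` odd; then no `(2k - 1) q / p` is an integer, so
`S(p, -q) = -S(p, q)`, which reduces `q < 0` to the case `-q > 0` applied to `p + 2q`.
-/

open Finset

noncomputable def tulerSum (p q : ℤ) : ℤ :=
  ∑ k ∈ Icc 1 (p / 2), (⌊(((2 * k - 1) * q : ℤ) : ℚ) / (p : ℚ)⌋.negOnePow : ℤ)

lemma tulerSum_zero_left (q : ℤ) : tulerSum 0 q = 0 := rfl

lemma Int.floor_intCast_div_intCast_of_nonneg (a : ℤ) {b : ℤ} (hb : 0 ≤ b) :
    ⌊(a : ℚ) / (b : ℚ)⌋ = a / b := by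
  lift b to ℕ using hb
  exact Rat.floor_intCast_div_natCast a b

lemma tulerSum_eq_sum_negOnePow_ediv {p : ℤ} (hp : 0 ≤ p) (q : ℤ) :
    tulerSum p q = ∑ k ∈ Icc 1 (p / 2), (((2 * k - 1) * q / p).negOnePow : ℤ) := by
  simp only [tulerSum, Int.floor_intCast_div_intCast_of_nonneg _ hp]

lemma Int.negOnePow_eq_one_sub_two_mul_sum {n : ℤ} (hn : 0 ≤ n) :
    (n.negOnePow : ℤ) = 1 - 2 * ∑ m ∈ Icc 1 n, ((m - 1).negOnePow : ℤ) := by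
  induction n, hn using Int.leInduction with
  | base => simp
  | succ n hn ih =>
    rw [← insert_Icc_right_eq_Icc_add_one (by omega), sum_insert (by simp), add_sub_cancel_right,
      Int.negOnePow_succ, Units.val_neg]
    linarith

lemma Int.negOnePow_eq_one_sub_two_mul_sum_ite {n N : ℤ} (h0 : 0 ≤ n) (hN : n ≤ N) :
    (n.negOnePow : ℤ) = 1 - 2 * ∑ m ∈ Icc 1 N, if m ≤ n then ((m - 1).negOnePow : ℤ) else 0 := by
  rw [← sum_filter, Int.negOnePow_eq_one_sub_two_mul_sum h0]
  congr 3
  ext m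
  simp only [mem_filter, mem_Icc]
  omega

lemma card_filter_le_mul {X q m : ℤ} (hX : 0 ≤ X) (hq : 0 < q) (hm : 0 ≤ m) (hmq : m ≤ q) :
    (#{k ∈ Icc 1 (X / 2) | m * X ≤ (2 * k - 1) * q} : ℤ) = X / 2 - (m * X + q - 1) / (2 * q) := by
  set t := (m * X + q - 1) / (2 * q)
  have h2q : 0 < 2 * q := by omega
  have ht0 : 0 ≤ t := Int.ediv_nonneg (by nlinarith) h2q.le
  have htX : t ≤ X / 2 := by
    rw [← Int.lt_add_one_iff, Int.ediv_lt_iff_lt_mul h2q]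
    have : X ≤ 2 * (X / 2) + 1 := by omega
    nlinarith
  have hfilter : {k ∈ Icc 1 (X / 2) | m * X ≤ (2 * k - 1) * q} = Ioc t (X / 2) := by
    ext k
    have hk : t < k ↔ m * X + q - 1 < k * (2 * q) := Int.ediv_lt_iff_lt_mul h2q
    simp only [mem_filter, mem_Icc, mem_Ioc]
    constructor
    · rintro ⟨⟨_, hkX⟩, hk'⟩
      exact ⟨hk.mpr (by linarith), hkX⟩
    · rintro ⟨htk, hkX⟩
      exact ⟨⟨by omega, hkX⟩, by linarith [hk.mp htk]⟩
  rw [hfilter, Int.card_Ioc]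
  omega

lemma tulerSum_eq_sub_sum_card {X q : ℤ} (hX : 0 ≤ X) (hq : 0 < q) :
    tulerSum X q = X / 2 - 2 * ∑ m ∈ Icc 1 (q - 1),
      ((m - 1).negOnePow : ℤ) * #{k ∈ Icc 1 (X / 2) | m * X ≤ (2 * k - 1) * q} := by
  have hterm : ∀ k ∈ Icc 1 (X / 2), (((2 * k - 1) * q / X).negOnePow : ℤ) =
      1 - 2 * ∑ m ∈ Icc 1 (q - 1),
        if m * X ≤ (2 * k - 1) * q then ((m - 1).negOnePow : ℤ) else 0 := by
    intro k hk
    rw [mem_Icc] at hk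
    have hX0 : 0 < X := by omega
    have hjX : 2 * k - 1 < X := by omega
    have hlt : (2 * k - 1) * q / X < q - 1 + 1 :=
      (Int.ediv_lt_iff_lt_mul hX0).mpr (by nlinarith)
    rw [Int.negOnePow_eq_one_sub_two_mul_sum_ite (Int.ediv_nonneg (by nlinarith) hX)
      (Int.lt_add_one_iff.mp hlt)]
    simp only [Int.le_ediv_iff_mul_le hX0]
  rw [tulerSum_eq_sum_negOnePow_ediv hX, sum_congr rfl hterm, sum_sub_distrib, ← mul_sum,
    sum_comm, sum_const, Int.card_Icc]
  simp only [sum_ite, sum_const_zero, add_zero, sum_const, nsmul_eq_mul, mul_comm]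
  omega

lemma tulerSum_eq_sub_sum_ediv {X q : ℤ} (hX : 0 ≤ X) (hq : 0 < q) :
    tulerSum X q = X / 2 - 2 * ∑ m ∈ Icc 1 (q - 1),
      ((m - 1).negOnePow : ℤ) * (X / 2 - (m * X + q - 1) / (2 * q)) := by
  rw [tulerSum_eq_sub_sum_card hX hq]
  congr 2
  refine sum_congr rfl fun m hm => ?_
  rw [mem_Icc] at hm
  rw [card_filter_le_mul hX hq (by omega) (by omega)]

lemma tulerSum_add_two_mul_self {X q : ℤ} (hX : 0 ≤ X) (hq : 0 < q) :
    tulerSum (X + 2 * q) q = tulerSum X q + tulerSum (2 * q) q := by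
  -- the increment does not depend on `Y`, so it can be read off at `Y = 0`
  have hshift : ∀ Y, 0 ≤ Y → tulerSum (Y + 2 * q) q =
      tulerSum Y q + (q - 2 * ∑ m ∈ Icc 1 (q - 1), ((m - 1).negOnePow : ℤ) * (q - m)) := by
    intro Y hY
    have hhalf : (Y + 2 * q) / 2 = Y / 2 + q := by omega
    have hdiv : ∀ m, (m * (Y + 2 * q) + q - 1) / (2 * q) = (m * Y + q - 1) / (2 * q) + m :=
      fun m => by
        rw [show m * (Y + 2 * q) + q - 1 = m * Y + q - 1 + m * (2 * q) by ring]
        exact Int.add_mul_ediv_right _ _ (by omega)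
    rw [tulerSum_eq_sub_sum_ediv (by omega) hq, tulerSum_eq_sub_sum_ediv hY hq, hhalf]
    simp only [hdiv, show ∀ A B C m : ℤ, C * (A + q - (B + m)) = C * (A - B) + C * (q - m) by
      intros; ring, sum_add_distrib]
    ring
  have h0 := hshift 0 le_rfl
  rw [zero_add, tulerSum_zero_left, zero_add] at h0
  rw [hshift X hX, h0]

lemma tulerSum_two_mul_self {q : ℤ} (hq : 0 < q) (hodd : Odd q) : tulerSum (2 * q) q = 1 := by
  have hterm : ∀ k ∈ Icc 1 q,
      (((2 * k - 1) * q / (2 * q)).negOnePow : ℤ) = ((k - 1).negOnePow : ℤ) := by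
    intro k _
    rw [show (2 * k - 1) * q = q + (k - 1) * (2 * q) by ring,
      Int.add_mul_ediv_right _ _ (by omega), Int.ediv_eq_zero_of_lt hq.le (by omega), zero_add]
  have hsum := Int.negOnePow_eq_one_sub_two_mul_sum hq.le
  rw [Int.negOnePow_odd q hodd, Units.val_neg, Units.val_one] at hsum
  rw [tulerSum_eq_sum_negOnePow_ediv (by omega), Int.mul_ediv_cancel_left q two_ne_zero,
    sum_congr rfl hterm]
  linarith

lemma Int.negOnePow_neg_ediv_of_not_dvd {a b : ℤ} (hb : 0 < b) (h : ¬ b ∣ a) :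
    ((-a) / b).negOnePow = -(a / b).negOnePow := by
  rw [Int.neg_ediv, if_neg h, Int.sign_eq_one_of_pos hb, Int.negOnePow_sub, Int.negOnePow_neg,
    Int.negOnePow_one, mul_neg_one]

lemma tulerSum_neg_right {p q : ℤ} (hp : Even p) (hq : Odd q) :
    tulerSum p (-q) = -tulerSum p q := by
  rw [tulerSum, tulerSum, ← sum_neg_distrib]
  refine sum_congr rfl fun k hk => ?_
  rw [mem_Icc] at hk
  have hp0 : 0 < p := by omega
  have hodd : Odd ((2 * k - 1) * q) := Odd.mul ⟨k - 1, by ring⟩ hq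
  have hndvd : ¬ p ∣ (2 * k - 1) * q := fun h =>
    Int.not_even_iff_odd.mpr hodd (even_iff_two_dvd.mpr (hp.two_dvd.trans h))
  rw [mul_neg, Int.floor_intCast_div_intCast_of_nonneg _ hp0.le,
    Int.floor_intCast_div_intCast_of_nonneg _ hp0.le, Int.negOnePow_neg_ediv_of_not_dvd hp0 hndvd,
    Units.val_neg]

lemma tulerSum_add_two_mul_self_of_odd {X q : ℤ} (hX : 0 ≤ X) (hq : 0 < q) (hodd : Odd q) :
    tulerSum (X + 2 * q) q = tulerSum X q + 1 := by
  rw [tulerSum_add_two_mul_self hX hq, tulerSum_two_mul_self hq hodd]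

/-- Arithmetic content of Proposition 3.2(3): adding two horizontal twists,
i.e. `lk(R_{(p+2q)/q}) = lk(R_{p/q}) + 1` via Tuler's formula. -/
theorem tuler_sum_add_two_q (p q : ℤ) (hp : 0 < p) (hpe : Even p)
    (hpq : Int.gcd p q = 1) (hpos : 0 < p + 2 * q) :
    ∑ k ∈ Finset.Icc (1 : ℤ) ((p + 2 * q) / 2),
        (((-1 : ℤˣ) ^ ⌊(((2 * k - 1) * q : ℤ) : ℚ) / (((p + 2 * q) : ℤ) : ℚ)⌋ : ℤˣ) : ℤ)
      = (∑ k ∈ Finset.Icc (1 : ℤ) (p / 2),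
        (((-1 : ℤˣ) ^ ⌊(((2 * k - 1) * q : ℤ) : ℚ) / ((p : ℤ) : ℚ)⌋ : ℤˣ) : ℤ)) + 1 := by
  have hq : Odd q := by
    rw [← Int.not_even_iff_odd]
    intro hqe
    have h2 := Int.dvd_gcd hpe.two_dvd hqe.two_dvd
    rw [hpq] at h2
    norm_num at h2
  show tulerSum (p + 2 * q) q = tulerSum p q + 1
  rcases lt_trichotomy q 0 with hneg | rfl | hposq
  · have h := tulerSum_add_two_mul_self_of_odd hpos.le (neg_pos.mpr hneg) hq.neg
    rw [show p + 2 * q + 2 * -q = p by ring, tulerSum_neg_right hpe hq,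
      tulerSum_neg_right (hpe.add (even_two_mul q)) hq] at h
    linarith
  · exact absurd hq (by decide)
  · exact tulerSum_add_two_mul_self_of_odd hp.le hposq hq
end

section
/- Let f, g : ℤ × ℤ → ℤ be two functions such that each h ∈ {f, g} satisfies: (i) h(0,1) = 0; (ii) h(−p, q) = −h(p, q) for all coprime integers p, q with p even; (iii) h(p + 2q, q) = h(p, q) + 1 for all coprime integers p, q with p even; and (iv) h(p, p + q) = −h(p, q) for all coprime integers p, q with p even. Then f(p,q) = g(p,q) for all coprime integers p, q with p even. (This expresses the correctness of the paper's algorithm: the four rules of Proposition 3.2 determine the linking number of every two-component rational link uniquely.) -/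
/-- Uniqueness claim underlying the paper's algorithm: any two functions on
pairs of integers satisfying the four rules of Proposition 3.2 agree on all
admissible pairs `(p, q)` (i.e. `gcd(p,q) = 1` with `p` even). -/
theorem linking_rules_unique (f g : ℤ × ℤ → ℤ)
    (hf0 : f (0, 1) = 0)
    (hf1 : ∀ p q : ℤ, Int.gcd p q = 1 → Even p → f (-p, q) = - f (p, q))
    (hf2 : ∀ p q : ℤ, Int.gcd p q = 1 → Even p → f (p + 2 * q, q) = f (p, q) + 1)
    (hf3 : ∀ p q : ℤ, Int.gcd p q = 1 → Even p → f (p, p + q) = - f (p, q))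
    (hg0 : g (0, 1) = 0)
    (hg1 : ∀ p q : ℤ, Int.gcd p q = 1 → Even p → g (-p, q) = - g (p, q))
    (hg2 : ∀ p q : ℤ, Int.gcd p q = 1 → Even p → g (p + 2 * q, q) = g (p, q) + 1)
    (hg3 : ∀ p q : ℤ, Int.gcd p q = 1 → Even p → g (p, p + q) = - g (p, q)) :
    ∀ p q : ℤ, Int.gcd p q = 1 → Even p → f (p, q) = g (p, q) := by
  have fzero : ∀ (h : ℤ × ℤ → ℤ),
      (∀ p q : ℤ, Int.gcd p q = 1 → Even p → h (-p, q) = - h (p, q)) →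
      ∀ b : ℤ, Int.gcd 0 b = 1 → h (0, b) = 0 := by
    intro h h1 b hb
    have := h1 0 b hb Even.zero
    rw [neg_zero] at this
    linarith
  have key : ∀ n : ℕ, ∀ p q : ℤ, p.natAbs + q.natAbs = n → 0 < p →
      Int.gcd p q = 1 → Even p → f (p, q) = g (p, q) := by
    intro n
    induction n using Nat.strong_induction_on with
    | _ n ih =>
    intro p q hn hppos hpq hp
    have step : ∀ a b : ℤ, a.natAbs + b.natAbs < n → Int.gcd a b = 1 → Even a →
        f (a, b) = g (a, b) := by
      intro a b hm h2 h3
      rcases lt_trichotomy a 0 with ha | ha | ha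
      · have h2' : Int.gcd (-a) b = 1 := by simpa [Int.gcd] using h2
        have hfa := hf1 (-a) b h2' h3.neg
        have hga := hg1 (-a) b h2' h3.neg
        rw [neg_neg] at hfa hga
        have hkey := ih (a.natAbs + b.natAbs) hm (-a) b (by simp) (by omega) h2' h3.neg
        rw [hfa, hga, hkey]
      · subst ha; exact (fzero f hf1 b h2).trans (fzero g hg1 b h2).symm
      · exact ih (a.natAbs + b.natAbs) hm a b rfl ha h2 h3
    have hco : IsCoprime p q := Int.isCoprime_iff_gcd_eq_one.mpr hpq
    have hq0 : q ≠ 0 := by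
      rintro rfl
      obtain ⟨r, hr⟩ := hp
      simp [Int.gcd] at hpq
      omega
    have hne : p.natAbs ≠ q.natAbs := by
      intro h
      obtain ⟨r, hr⟩ := hp
      rw [Int.gcd, h, Nat.gcd_self] at hpq
      omega
    rcases lt_or_gt_of_ne hne with hlt | hgt
    · -- |p| < |q|
      rcases hq0.lt_or_gt with hq | hq
      · -- q < 0: opposite signs, use q' = p + q
        have h1 : IsCoprime p (p + q) := by
          have h := hco.add_mul_left_right 1
          rwa [mul_one, add_comm] at h
        have h1' := Int.isCoprime_iff_gcd_eq_one.mp h1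
        have hfe := hf3 p q hpq hp
        have hge := hg3 p q hpq hp
        have hs := step p (p + q) (by omega) h1' hp
        linarith
      · -- q > 0: same sign, use q' = q - p
        have h1 : IsCoprime p (q - p) := by
          have h := hco.add_mul_left_right (-1)
          rwa [mul_neg_one, ← sub_eq_add_neg] at h
        have h1' := Int.isCoprime_iff_gcd_eq_one.mp h1
        have hfe := hf3 p (q - p) h1' hp
        have hge := hg3 p (q - p) h1' hp
        rw [show p + (q - p) = q by ring] at hfe hge
        have hs := step p (q - p) (by omega) h1' hp
        linarith
    · -- |p| > |q|
      obtain ⟨r, hr⟩ := hp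
      rcases hq0.lt_or_gt with hq | hq
      · -- q < 0: use p' = p + 2q
        have h1 : IsCoprime (p + 2 * q) q := hco.add_mul_right_left 2
        have h1' := Int.isCoprime_iff_gcd_eq_one.mp h1
        have hfe := hf2 p q hpq ⟨r, hr⟩
        have hge := hg2 p q hpq ⟨r, hr⟩
        have hs := step (p + 2 * q) q (by omega) h1' ⟨r + q, by omega⟩
        linarith
      · -- q > 0: use p' = p - 2q
        have h1 : IsCoprime (p - 2 * q) q := by
          have h := hco.add_mul_right_left (-2)
          rwa [show p + -2 * q = p - 2 * q by ring] at h
        have h1' := Int.isCoprime_iff_gcd_eq_one.mp h1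
        have hfe := hf2 (p - 2 * q) q h1' ⟨r - q, by omega⟩
        have hge := hg2 (p - 2 * q) q h1' ⟨r - q, by omega⟩
        rw [show p - 2 * q + 2 * q = p by ring] at hfe hge
        have hs := step (p - 2 * q) q (by omega) h1' ⟨r - q, by omega⟩
        linarith
  intro p q hpq hp
  rcases lt_trichotomy p 0 with h | h | h
  · have h2' : Int.gcd (-p) q = 1 := by simpa [Int.gcd] using hpq
    have hfa := hf1 (-p) q h2' hp.neg
    have hga := hg1 (-p) q h2' hp.neg
    rw [neg_neg] at hfa hga
    have hkey := key (p.natAbs + q.natAbs) (-p) q (by simp) (by omega) h2' hp.neg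
    rw [hfa, hga, hkey]
  · subst h; exact (fzero f hf1 q hpq).trans (fzero g hg1 q hpq).symm
  · exact key (p.natAbs + q.natAbs) p q rfl h hpq hp
end
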